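/- Let M be a 3-connected matroid and let F be a maximal fan of M with ordering (e_1, …, e_{|F|}), where either |F| = 2, or |F| ≥ 3 and {e_1, e_2, e_3} is a triad. Suppose M has a 4-element circuit C = {e_1, e_i, a, b} with i ∈ {2, 3} and a, b ∉ F. Then for all x ∈ E(M) − (F ∪ C), we have x ∉ cl*(F). -/

import Mathlib

open Matroid Set

namespace DetPairs

variable {α : Type*}

/-- The rank of a set in a matroid: the maximum size of an independent subset
(as an integer, for convenient arithmetic). -/
noncomputable def r (M : Matroid α) (X : Set α) : ℤ :=
  ((sSup (Set.ncard '' {I | M.Indep I ∧ I ⊆ X}) : ℕ) : ℤ)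

/-- The connectivity function `λ_M(X) = r(X) + r(E − X) − r(M)`. -/
noncomputable def lam (M : Matroid α) (X : Set α) : ℤ :=
  r M X + r M (M.E \ X) - r M M.E

/-- Local connectivity `⊓(X,Y) = r(X) + r(Y) − r(X ∪ Y)`. -/
noncomputable def localConn (M : Matroid α) (X Y : Set α) : ℤ :=
  r M X + r M Y - r M (X ∪ Y)

/-- A circuit: a minimal dependent set. -/
def Circuit (M : Matroid α) (C : Set α) : Prop :=
  C ⊆ M.E ∧ ¬ M.Indep C ∧ ∀ D, D ⊂ C → M.Indep D

/-- A cocircuit: a circuit of the dual. -/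
def Cocircuit (M : Matroid α) (C : Set α) : Prop := Circuit M✶ C

/-- A triangle: a 3-element circuit. -/
def Triangle (M : Matroid α) (T : Set α) : Prop := Circuit M T ∧ T.ncard = 3

/-- A triad: a 3-element cocircuit. -/
def Triad (M : Matroid α) (T : Set α) : Prop := Cocircuit M T ∧ T.ncard = 3

/-- A quad: a 4-element set that is both a circuit and a cocircuit. -/
def Quad (M : Matroid α) (Q : Set α) : Prop :=
  Circuit M Q ∧ Cocircuit M Q ∧ Q.ncard = 4

/-- Deletion of a set of elements. -/
def Del (M : Matroid α) (D : Set α) : Matroid α := M ↾ (M.E \ D)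

/-- Contraction of a set of elements. -/
def Con (M : Matroid α) (C : Set α) : Matroid α := (M✶ ↾ (M.E \ C))✶

/-- `M` is 3-connected: it has no `k`-separation for `k = 1, 2`, where a
`k`-separation is a set `X` with `λ(X) = k − 1`, `|X| ≥ k` and `|E − X| ≥ k`. -/
def ThreeConnected (M : Matroid α) : Prop :=
  ∀ k : ℕ, 0 < k → k < 3 → ∀ X ⊆ M.E,
    ¬ (lam M X = (k : ℤ) - 1 ∧ (k : ℤ) ≤ X.ncard ∧ (k : ℤ) ≤ (M.E \ X).ncard)

/-- A detachable pair: distinct elements `e, f` such that `M \ e \ f` or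
`M / e / f` is 3-connected. -/
def DetachablePair (M : Matroid α) (e f : α) : Prop :=
  e ≠ f ∧ e ∈ M.E ∧ f ∈ M.E ∧
    (ThreeConnected (Del M {e, f}) ∨ ThreeConnected (Con M {e, f}))

/-- The triple of elements with indices `i, i+1, i+2` in an ordering. -/
def tri (e : ℕ → α) (i : ℕ) : Set α := {e i, e (i + 1), e (i + 2)}

/-- `(e 0, …, e (n-1))` is a fan ordering of length `n ≥ 3` in `M`:
consecutive triples alternate between triangles and triads. -/
def FanOrd (M : Matroid α) (n : ℕ) (e : ℕ → α) : Prop :=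
  3 ≤ n ∧ Set.InjOn e (Set.Iio n) ∧ (∀ i < n, e i ∈ M.E) ∧
    (Triangle M (tri e 0) ∨ Triad M (tri e 0)) ∧
    ∀ i, i + 3 < n →
      (Triangle M (tri e i) → Triad M (tri e (i + 1))) ∧
      (Triad M (tri e i) → Triangle M (tri e (i + 1)))

/-- A fan (as a set): either a 2-element subset of the ground set, or the
underlying set of a fan ordering of length at least 3. -/
def IsFan (M : Matroid α) (F : Set α) : Prop :=
  (F ⊆ M.E ∧ F.ncard = 2) ∨ ∃ n e, FanOrd M n e ∧ F = e '' Set.Iio n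

/-- A maximal fan: a fan contained in no strictly larger fan. -/
def MaximalFan (M : Matroid α) (F : Set α) : Prop :=
  IsFan M F ∧ ∀ F', IsFan M F' → F ⊆ F' → F' = F

/-- `M` is a wheel or a whirl: its ground set has a cyclic ordering of even size
`2n` in which consecutive triples alternate between triangles and triads. -/
def IsWheelOrWhirl (M : Matroid α) : Prop :=
  ∃ (n : ℕ) (e : ℕ → α), 2 ≤ n ∧ Set.InjOn e (Set.Iio (2 * n)) ∧
    M.E = e '' Set.Iio (2 * n) ∧
    ∀ i < 2 * n,
      (i % 2 = 0 → Triangle M {e i, e ((i + 1) % (2 * n)), e ((i + 2) % (2 * n))}) ∧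
      (i % 2 = 1 → Triad M {e i, e ((i + 1) % (2 * n)), e ((i + 2) % (2 * n))})

/-- An `M(K₄)`-separator: a 6-element set `{a,b,c,x,y,z}` where `{x,y,z}` is a
triad and `{a,b,c}`, `{a,x,y}`, `{b,x,z}`, `{c,y,z}` are triangles. -/
def MK4Sep (M : Matroid α) (S : Set α) : Prop :=
  ∃ a b c x y z : α, S = {a, b, c, x, y, z} ∧ S.ncard = 6 ∧
    Triad M {x, y, z} ∧ Triangle M {a, b, c} ∧ Triangle M {a, x, y} ∧
    Triangle M {b, x, z} ∧ Triangle M {c, y, z}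

/-- A vertical 3-separation `(X, {e}, Y)` of `M`. -/
def VertThreeSep (M : Matroid α) (X : Set α) (e : α) (Y : Set α) : Prop :=
  X ∪ {e} ∪ Y = M.E ∧ Disjoint X Y ∧ e ∉ X ∧ e ∉ Y ∧
    lam M X = 2 ∧ lam M Y = 2 ∧ e ∈ M.closure X ∧ e ∈ M.closure Y ∧
    3 ≤ r M X ∧ 3 ≤ r M Y

/-- `N` is a simplification of `M`: a restriction of `M` to a set of
representatives, one from each parallel class of nonloops. -/
def SimplificationOf (M N : Matroid α) : Prop :=
  ∃ X : Set α, (∀ x ∈ X, x ∈ M.E ∧ x ∉ M.closure ∅) ∧ N = M ↾ X ∧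
    ∀ y ∈ M.E, y ∉ M.closure ∅ →
      ∃! x, x ∈ X ∧ M.closure {y} = M.closure {x}

/-!
Suppose `x ∈ cl*(F)`. We sweep along the fan inside `M✶`. If `x` is in the coclosure of
`{e k, …, e (n-1)}` (together with `e 0`), the triad `{e k, e (k+1), e (k+2)}` makes `e (k+1)`
redundant, and the triangle `{e (k-1), e k, e (k+1)}` meets what is left only in `e k`, so by
orthogonality of circuits and cocircuits `e k` can be dropped too. The circuit `C` does the same
for `e 0`. What remains is at most the last two elements of the fan. Cocircuits of a 3-connected
matroid have at least three elements, so these two elements and `x` form a triad, and adding `x`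
to the fan contradicts maximality. When `i = 2` and `|F| ≤ 4`, swapping `e 1` and `e 2` gives
another fan ordering, which reduces this case to `i = 1`.
-/

section Rank

variable {M : Matroid α} {X I B C D : Set α}

lemma circuit_iff_isCircuit : Circuit M C ↔ M.IsCircuit C := by
  rw [isCircuit_iff_forall_ssubset, Dep]
  exact ⟨fun ⟨hE, hC, hmin⟩ => ⟨⟨hC, hE⟩, fun I hI => hmin I hI⟩,
    fun ⟨⟨hC, hE⟩, hmin⟩ => ⟨hE, hC, fun I hI => hmin hI⟩⟩

lemma cocircuit_iff_isCocircuit : Cocircuit M C ↔ M.IsCocircuit C :=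
  circuit_iff_isCircuit

lemma ncard_le_r [M.Finite] (hI : M.Indep I) (hIX : I ⊆ X) : (I.ncard : ℤ) ≤ r M X := by
  have hbdd : BddAbove (Set.ncard '' {I | M.Indep I ∧ I ⊆ X}) :=
    ⟨M.E.ncard, by
      rintro m ⟨J, ⟨hJ, -⟩, rfl⟩
      exact ncard_le_ncard hJ.subset_ground M.ground_finite⟩
  unfold r
  exact_mod_cast le_csSup hbdd ⟨I, ⟨hI, hIX⟩, rfl⟩

lemma r_eq_ncard_of_isBasis' [M.Finite] (hI : M.IsBasis' I X) : r M X = I.ncard := by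
  refine le_antisymm ?_ (ncard_le_r hI.indep hI.subset)
  have h : sSup (Set.ncard '' {I | M.Indep I ∧ I ⊆ X}) ≤ I.ncard := by
    refine csSup_le ⟨0, ⟨∅, ⟨M.empty_indep, empty_subset _⟩, by simp⟩⟩ ?_
    rintro m ⟨J, ⟨hJ, hJX⟩, rfl⟩
    obtain ⟨J', hJ', hJJ'⟩ := hJ.subset_isBasis'_of_subset hJX
    rw [ncard_def, ncard_def, ← hJ'.encard_eq_encard hI]
    exact ENat.toNat_le_toNat (encard_le_encard hJJ') hJ'.indep.finite.encard_lt_top.ne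
  unfold r
  exact_mod_cast h

lemma r_ground_eq_ncard [M.Finite] (hB : M.IsBase B) : r M M.E = B.ncard :=
  r_eq_ncard_of_isBasis' hB.isBasis_ground.isBasis'

lemma r_le_ncard [M.Finite] (hX : X.Finite) : r M X ≤ X.ncard := by
  obtain ⟨I, hI⟩ := M.exists_isBasis' X
  rw [r_eq_ncard_of_isBasis' hI]
  exact_mod_cast ncard_le_ncard hI.subset hX

lemma r_lt_ncard_of_isCircuit [M.Finite] (hC : M.IsCircuit C) : r M C < C.ncard := by
  obtain ⟨I, hI⟩ := M.exists_isBasis' C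
  rw [r_eq_ncard_of_isBasis' hI]
  have hIC : I ⊂ C := hI.subset.ssubset_of_ne (by rintro rfl; exact hC.dep.not_indep hI.indep)
  exact_mod_cast ncard_lt_ncard hIC hC.finite

lemma r_ground_le_r_add_r_compl [M.Finite] (X : Set α) :
    r M M.E ≤ r M X + r M (M.E \ X) := by
  obtain ⟨B, hB⟩ := M.exists_isBase
  rw [r_ground_eq_ncard hB, ← ncard_inter_add_ncard_sdiff_eq_ncard B X hB.finite]
  push_cast
  exact add_le_add (ncard_le_r (hB.indep.subset inter_subset_left) inter_subset_right)
    (ncard_le_r (hB.indep.subset sdiff_subset) (sdiff_subset_sdiff_left hB.subset_ground))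

lemma r_compl_lt_r_ground [M.Finite] (hD : M.IsCocircuit D) : r M (M.E \ D) < r M M.E := by
  obtain ⟨I, hI⟩ := M.exists_isBasis' (M.E \ D)
  obtain ⟨B, hB, hIB⟩ := hI.indep.exists_isBase_superset
  rw [r_eq_ncard_of_isBasis' hI, r_ground_eq_ncard hB]
  have hIB' : I ≠ B := by
    rintro rfl
    exact hD.isCircuit.dep.not_indep
      ((coindep_iff_exists hD.subset_ground).2 ⟨I, hB, hI.subset⟩)
  exact_mod_cast ncard_lt_ncard (hIB.ssubset_of_ne hIB') hB.finite

end Rank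

section ThreeConnected

variable {M : Matroid α} {X D T : Set α}

lemma lam_nonneg [M.Finite] (X : Set α) : 0 ≤ lam M X := by
  unfold lam
  linarith [r_ground_le_r_add_r_compl (M := M) X]

lemma lam_lt_r_of_isCocircuit [M.Finite] (hD : M.IsCocircuit D) : lam M D < r M D := by
  unfold lam
  linarith [r_compl_lt_r_ground hD]

lemma ThreeConnected.le_lam [M.Finite] (hM : ThreeConnected M) (hX : X ⊆ M.E) {k : ℕ}
    (hk : k ≤ 2) (hkX : k ≤ X.ncard) (hkX' : k ≤ (M.E \ X).ncard) : (k : ℤ) ≤ lam M X := by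
  by_contra! hlt
  obtain ⟨j, hj⟩ : ∃ j : ℕ, lam M X = j := ⟨_, (Int.toNat_of_nonneg (lam_nonneg X)).symm⟩
  exact hM (j + 1) (by omega) (by omega) X hX ⟨by push_cast; omega, by omega, by omega⟩

lemma ThreeConnected.three_le_ncard_of_isCocircuit [M.Finite] (hM : ThreeConnected M)
    (hE : 4 ≤ M.E.ncard) (hD : M.IsCocircuit D) : 3 ≤ D.ncard := by
  by_contra! hD3
  have hDfin : D.Finite := M.ground_finite.subset hD.subset_ground
  have hpos : 0 < D.ncard := (ncard_pos hDfin).2 hD.nonempty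
  have hcompl := ncard_sdiff_add_ncard_of_subset hD.subset_ground M.ground_finite
  have hlam := hM.le_lam hD.subset_ground (k := D.ncard) (by omega) le_rfl (by omega)
  have := lam_lt_r_of_isCocircuit hD
  have := r_le_ncard (M := M) hDfin
  omega

lemma ThreeConnected.not_triad_of_triangle [M.Finite] (hM : ThreeConnected M)
    (hE : 5 ≤ M.E.ncard) (hT : Triangle M T) : ¬ Triad M T := by
  intro hT'
  have hC : M.IsCircuit T := circuit_iff_isCircuit.1 hT.1
  have hcompl := ncard_sdiff_add_ncard_of_subset hC.subset_ground M.ground_finite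
  have h3 := hT.2
  have hlam := hM.le_lam hC.subset_ground (k := 2) le_rfl (by omega) (by omega)
  have := lam_lt_r_of_isCocircuit (cocircuit_iff_isCocircuit.1 hT'.1)
  have := r_lt_ncard_of_isCircuit hC
  omega

lemma ThreeConnected.triad_insert_of_mem_dual_closure [M.Finite] (hM : ThreeConnected M)
    (hE : 4 ≤ M.E.ncard) {Y : Set α} {x : α} (hYE : Y ⊆ M.E) (hY : Y.ncard ≤ 2) (hxY : x ∉ Y)
    (hx : x ∈ M✶.closure Y) : Y.ncard = 2 ∧ Triad M (insert x Y) := by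
  obtain ⟨D, hDY, hD, -⟩ := (mem_closure_iff_exists_isCircuit hxY).1 hx
  have hD3 := hM.three_le_ncard_of_isCocircuit hE hD
  have hxYfin : (insert x Y).Finite := (M.ground_finite.subset hYE).insert x
  have hcard := ncard_insert_of_notMem hxY (M.ground_finite.subset hYE)
  have hDeq : D = insert x Y := eq_of_subset_of_ncard_le hDY (by omega) hxYfin
  subst hDeq
  exact ⟨by omega, cocircuit_iff_isCocircuit.2 hD, by omega⟩

end ThreeConnected

section Coclosure

variable {M : Matroid α} {T Z : Set α} {x y : α}

lemma _root_.Matroid.IsCircuit.mem_dual_closure_of_mem_dual_closure_insert (hT : M.IsCircuit T)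
    (hyT : y ∈ T) (hxT : x ∉ T) (hTZ : Disjoint T Z) (hx : x ∈ M✶.closure (insert y Z)) :
    x ∈ M✶.closure Z := by
  by_contra hxZ
  have hy := (M✶.closure_exchange ⟨hx, hxZ⟩).1
  have hyxZ : y ∉ insert x Z := by
    rintro (rfl | hyZ)
    exacts [hxT hyT, hTZ.notMem_of_mem_left hyT hyZ]
  obtain ⟨D, hDss, hD, hyD⟩ := (mem_closure_iff_exists_isCircuit hyxZ).1 hy
  refine hT.inter_isCocircuit_ne_singleton (K := D) hD (e := y) ?_
  refine subset_antisymm (fun z ⟨hzT, hzD⟩ => ?_) (singleton_subset_iff.2 ⟨hyT, hyD⟩)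
  obtain rfl | rfl | hzZ := hDss hzD
  · rfl
  · exact absurd hzT hxT
  · exact absurd hzZ (hTZ.notMem_of_mem_left hzT)

lemma Triad.mem_dual_closure {u v w : α} (h : Triad M {u, v, w}) : v ∈ M✶.closure {u, w} := by
  refine M✶.closure_subset_closure ?_
    ((cocircuit_iff_isCocircuit.1 h.1).isCircuit.mem_closure_sdiff_singleton_of_mem (by simp))
  intro z
  simp only [mem_sdiff, mem_insert_iff, mem_singleton_iff]
  tauto

end Coclosure

lemma _root_.Set.InjOn.disjoint_image {β γ : Type*} {f : β → γ} {s t u : Set β}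
    (hf : InjOn f u) (hs : s ⊆ u) (ht : t ⊆ u) (hst : Disjoint s t) :
    Disjoint (f '' s) (f '' t) := by
  rw [disjoint_iff_inter_eq_empty, ← hf.image_inter hs ht, hst.inter_eq, image_empty]

section Fan

variable {M : Matroid α} {n k : ℕ} {e : ℕ → α} {x : α}

structure AltTriadTriangle (M : Matroid α) (n : ℕ) (e : ℕ → α) : Prop where
  triad : ∀ j, 2 * j + 2 < n → Triad M (tri e (2 * j))
  triangle : ∀ j, 2 * j + 3 < n → Triangle M (tri e (2 * j + 1))

lemma FanOrd.altTriadTriangle (h : FanOrd M n e) (h0 : Triad M (tri e 0)) :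
    AltTriadTriangle M n e := by
  have step := h.2.2.2.2
  have htriad : ∀ j, 2 * j + 2 < n → Triad M (tri e (2 * j)) := by
    intro j
    induction j with
    | zero => exact fun _ => h0
    | succ j ih =>
      exact fun hj =>
        (step (2 * j + 1) (by omega)).1 ((step (2 * j) (by omega)).2 (ih (by omega)))
  exact ⟨htriad, fun j hj => (step (2 * j) (by omega)).2 (htriad j (by omega))⟩

lemma AltTriadTriangle.fanOrd [M.Finite] (h : AltTriadTriangle M n e) (hM : ThreeConnected M)
    (hn : 3 ≤ n) (hinj : InjOn e (Iio n)) (heE : ∀ j < n, e j ∈ M.E) (hE : n < M.E.ncard) :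
    FanOrd M n e := by
  refine ⟨hn, hinj, heE, Or.inr (h.triad 0 (by omega)), fun j hj => ?_⟩
  have hE5 : 5 ≤ M.E.ncard := by omega
  obtain ⟨m, rfl | rfl⟩ := Nat.even_or_odd' j
  · exact ⟨fun ht => absurd (h.triad m (by omega)) (hM.not_triad_of_triangle hE5 ht),
      fun _ => h.triangle m (by omega)⟩
  · exact ⟨fun _ => h.triad (m + 1) (by omega),
      fun ht => absurd ht (hM.not_triad_of_triangle hE5 (h.triangle m (by omega)))⟩

lemma AltTriadTriangle.update (h : AltTriadTriangle M (k + 2) e) (hk : Even k)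
    (hx : Triad M {e k, e (k + 1), x}) :
    AltTriadTriangle M (k + 3) (Function.update e (k + 2) x) := by
  have htri : ∀ j, j + 2 < k + 2 → tri (Function.update e (k + 2) x) j = tri e j := by
    intro j hj
    simp only [tri, Function.update_of_ne (show j ≠ k + 2 by omega),
      Function.update_of_ne (show j + 1 ≠ k + 2 by omega),
      Function.update_of_ne (show j + 2 ≠ k + 2 by omega)]
  obtain ⟨m, rfl⟩ := hk
  refine ⟨fun j hj => ?_, fun j hj => ?_⟩
  · obtain hj | rfl : 2 * j + 2 < m + m + 2 ∨ m = j := by omega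
    · exact htri _ hj ▸ h.triad j hj
    · simpa [tri, two_mul, Function.update_of_ne] using hx
  · exact htri (2 * j + 1) (by omega) ▸ h.triangle j (by omega)

lemma AltTriadTriangle.comp_swap (h : AltTriadTriangle M n e) (hn : n ≤ 4) :
    AltTriadTriangle M n (e ∘ Equiv.swap 1 2) := by
  refine ⟨fun j hj => ?_, fun j hj => ?_⟩ <;> obtain rfl : j = 0 := by omega
  · convert h.triad 0 (by omega) using 1
    simp [tri, Equiv.swap_apply_of_ne_of_ne, pair_comm]
  · convert h.triangle 0 (by omega) using 1
    simp [tri, Equiv.swap_apply_of_ne_of_ne, insert_comm (e 2) (e 1)]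

end Fan

section Sweep

variable {M : Matroid α} {n k : ℕ} {e : ℕ → α} {x : α} {Z T : Set α}

lemma image_Ico_eq_insert_insert (e : ℕ → α) (h : k + 2 ≤ n) :
    e '' Ico k n = insert (e k) (insert (e (k + 1)) (e '' Ico (k + 2) n)) := by
  rw [← image_insert_eq, ← image_insert_eq]
  congr 1
  ext j
  simp only [mem_Ico, mem_insert_iff]
  omega

lemma tri_eq_image_Ico (e : ℕ → α) (k : ℕ) : tri e k = e '' Ico k (k + 3) := by
  rw [image_Ico_eq_insert_insert e (by omega),
    show Ico (k + 2) (k + 3) = {k + 2} by ext; simp; omega, image_singleton, tri]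

lemma notMem_image_Ico {j : ℕ} (hinj : InjOn e (Iio n)) (hj : j < k) : e j ∉ e '' Ico k n := by
  rintro ⟨l, ⟨hkl, hln⟩, hle⟩
  have := hinj (mem_Iio.2 hln) (mem_Iio.2 (by omega)) hle
  omega

lemma mem_dual_closure_step (htriad : Triad M (tri e k)) (hk : k + 2 < n)
    (hT : M.IsCircuit T) (hkT : e k ∈ T) (hxT : x ∉ T)
    (hTZ : Disjoint T (Z ∪ e '' Ico (k + 2) n))
    (hx : x ∈ M✶.closure (Z ∪ e '' Ico k n)) : x ∈ M✶.closure (Z ∪ e '' Ico (k + 2) n) := by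
  have hspan : e (k + 1) ∈ M✶.closure (insert (e k) (Z ∪ e '' Ico (k + 2) n)) :=
    M✶.closure_subset_closure (insert_subset_insert (singleton_subset_iff.2
      (Or.inr ⟨k + 2, ⟨le_rfl, hk⟩, rfl⟩))) htriad.mem_dual_closure
  rw [image_Ico_eq_insert_insert e hk.le, union_insert, union_insert, insert_comm,
    M✶.closure_insert_eq_of_mem_closure hspan] at hx
  exact hT.mem_dual_closure_of_mem_dual_closure_insert hkT hxT hTZ hx

lemma AltTriadTriangle.sweep (h : AltTriadTriangle M n e) (hinj : InjOn e (Iio n))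
    (hZ : Disjoint Z (e '' Ico 1 n)) (hxF : x ∉ e '' Iio n) {j : ℕ} (hj : 1 ≤ j)
    (hx : x ∈ M✶.closure (Z ∪ e '' Ico (2 * j) n)) :
    ∃ k, Even k ∧ 2 * j ≤ k ∧ n ≤ k + 2 ∧ x ∈ M✶.closure (Z ∪ e '' Ico k n) := by
  by_cases hjn : n ≤ 2 * j + 2
  · exact ⟨2 * j, even_two_mul j, le_rfl, hjn, hx⟩
  obtain ⟨i, rfl⟩ : ∃ i, j = i + 1 := ⟨j - 1, by omega⟩
  have hT := circuit_iff_isCircuit.1 (h.triangle i (by omega)).1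
  rw [tri_eq_image_Ico] at hT
  have hTZ : Disjoint (e '' Ico (2 * i + 1) (2 * i + 1 + 3))
      (Z ∪ e '' Ico (2 * (i + 1) + 2) n) :=
    disjoint_union_right.2
      ⟨hZ.symm.mono_left (image_mono (Ico_subset_Ico (by omega) (by omega))),
        hinj.disjoint_image (fun l hl => mem_Iio.2 (by simp at hl; omega))
          (fun l hl => mem_Iio.2 hl.2)
          (Ico_disjoint_Ico_same.mono_left (Ico_subset_Ico le_rfl (by omega)))⟩
  have hx' := mem_dual_closure_step (h.triad (i + 1) (by omega)) (by omega) hT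
    ⟨2 * (i + 1), by simp; omega, rfl⟩
    (fun hxT => hxF (image_mono (fun l hl => mem_Iio.2 (by simp at hl; omega)) hxT)) hTZ hx
  obtain ⟨k, hk, hjk, hkn, hxk⟩ := h.sweep hinj hZ hxF (j := i + 2) (by omega) hx'
  exact ⟨k, hk, by omega, hkn, hxk⟩
termination_by n - 2 * j

end Sweep

section Main

variable {M : Matroid α} {n k i : ℕ} {e : ℕ → α} {F : Set α} {a b x : α}

lemma Ico_zero_eq_Iio (n : ℕ) : Ico 0 n = Iio n := by
  ext
  simp

lemma image_swap_Iio (hn : 3 ≤ n) : Equiv.swap 1 2 '' Iio n = Iio n := by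
  rw [Equiv.image_eq_preimage_symm, Equiv.symm_swap]
  ext j
  simp only [mem_preimage, mem_Iio, Equiv.swap_apply_def]
  split_ifs <;> omega

lemma AltTriadTriangle.exists_swap (h : AltTriadTriangle M n e) (hinj : InjOn e (Iio n))
    (hn : 3 ≤ n) (hi : i = 1 ∨ i = 2) :
    ∃ (e' : ℕ → α) (i' : ℕ), AltTriadTriangle M n e' ∧ InjOn e' (Iio n) ∧
      e '' Iio n = e' '' Iio n ∧ e' 0 = e 0 ∧ e' i' = e i ∧ (i' = 1 ∨ (i' = 2 ∧ 5 ≤ n)) := by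
  by_cases hswap : i = 2 ∧ n ≤ 4
  · obtain ⟨rfl, hn4⟩ := hswap
    have hswap := image_swap_Iio hn
    refine ⟨e ∘ Equiv.swap 1 2, 1, h.comp_swap hn4,
      hinj.comp (Equiv.injective _).injOn fun j hj => hswap ▸ mem_image_of_mem _ hj,
      by rw [image_comp, hswap], rfl, rfl, Or.inl rfl⟩
  · exact ⟨e, i, h, hinj, rfl, rfl, rfl, by omega⟩

lemma AltTriadTriangle.exists_mem_dual_closure_tail (h : AltTriadTriangle M n e)
    (hinj : InjOn e (Iio n)) (hn : 3 ≤ n) (hF : F = e '' Iio n)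
    (hC : M.IsCircuit {e 0, e i, a, b}) (hi : i = 1 ∨ (i = 2 ∧ 5 ≤ n)) (ha : a ∉ F)
    (hb : b ∉ F) (hxF : x ∉ F) (hxC : x ∉ ({e 0, e i, a, b} : Set α))
    (hx : x ∈ M✶.closure F) :
    ∃ k, Even k ∧ n ≤ k + 2 ∧ x ∈ M✶.closure (e '' Ico k n) := by
  subst hF
  have hspan : e 1 ∈ M✶.closure (insert (e 0) (e '' Ico 2 n)) :=
    M✶.closure_subset_closure (insert_subset_insert (singleton_subset_iff.2
      (mem_image_of_mem e (show 2 ∈ Ico 2 n from ⟨le_rfl, hn⟩))))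
      (h.triad 0 (by omega)).mem_dual_closure
  rw [← Ico_zero_eq_Iio, image_Ico_eq_insert_insert e (by omega), insert_comm,
    M✶.closure_insert_eq_of_mem_closure hspan, ← singleton_union] at hx
  -- `e 0` is set aside until the sweep has passed `e i`; then `C` meets what is left only in `e 0`.
  obtain ⟨k, hk, h2k, hkn, hxk⟩ := h.sweep hinj
    (disjoint_singleton_left.2 (notMem_image_Ico hinj one_pos)) hxF (j := 1) le_rfl hx
  have hYF : e '' Ico k n ⊆ e '' Iio n := image_mono fun l hl => mem_Iio.2 hl.2
  have hCY : Disjoint {e 0, e i, a, b} (e '' Ico k n) := by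
    simp only [disjoint_insert_left, disjoint_singleton_left]
    exact ⟨notMem_image_Ico hinj (by omega), notMem_image_Ico hinj (by omega),
      fun h => ha (hYF h), fun h => hb (hYF h)⟩
  rw [singleton_union] at hxk
  exact ⟨k, hk, hkn, hC.mem_dual_closure_of_mem_dual_closure_insert (mem_insert _ _) hxC hCY hxk⟩

lemma MaximalFan.not_triad_extension [M.Finite] (hmax : MaximalFan M (e '' Iio (k + 2)))
    (hM : ThreeConnected M) (h : AltTriadTriangle M (k + 2) e) (hk : Even k)
    (hinj : InjOn e (Iio (k + 2))) (hFE : e '' Iio (k + 2) ⊆ M.E) (hxE : x ∈ M.E)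
    (hxF : x ∉ e '' Iio (k + 2)) (hE : k + 3 < M.E.ncard) : ¬ Triad M {e k, e (k + 1), x} := by
  intro hx
  set e' := Function.update e (k + 2) x
  have he'k : e' (k + 2) = x := Function.update_self ..
  have he' : EqOn e' e (Iio (k + 2)) := fun j hj => Function.update_of_ne (ne_of_lt hj) _ _
  have hinj' : InjOn e' (Iio (k + 3)) := by
    rw [show Iio (k + 3) = insert (k + 2) (Iio (k + 2)) by ext; simp; omega,
      injOn_insert (by simp), image_congr he', he'k]
    exact ⟨hinj.congr he'.symm, hxF⟩
  have he'E : ∀ j < k + 3, e' j ∈ M.E := by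
    intro j hj
    obtain rfl | hj := eq_or_ne j (k + 2)
    · rwa [he'k]
    · rw [he' (mem_Iio.2 (by omega))]
      exact hFE ⟨j, mem_Iio.2 (by omega), rfl⟩
  have hfan := (h.update hk hx).fanOrd hM (by omega) hinj' he'E hE
  have hFsub : e '' Iio (k + 2) ⊆ e' '' Iio (k + 3) := by
    rintro _ ⟨j, hj, rfl⟩
    exact ⟨j, mem_Iio.2 (by simp at hj; omega), he' hj⟩
  rw [← hmax.2 _ (Or.inr ⟨_, _, hfan, rfl⟩) hFsub] at hxF
  exact hxF ⟨k + 2, by simp, he'k⟩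

lemma MaximalFan.notMem_dual_closure_tail [M.Finite] (hmax : MaximalFan M F)
    (hM : ThreeConnected M) (hF : F = e '' Iio n) (h : AltTriadTriangle M n e)
    (hinj : InjOn e (Iio n)) (hFE : F ⊆ M.E) (hxE : x ∈ M.E) (hxF : x ∉ F) (hn : 2 ≤ n)
    (hE : n + 1 < M.E.ncard) (hk : Even k) (hkn : n ≤ k + 2) :
    x ∉ M✶.closure (e '' Ico k n) := by
  subst hF
  intro hx
  have hYF : e '' Ico k n ⊆ e '' Iio n := image_mono fun l hl => mem_Iio.2 hl.2
  have hY : (e '' Ico k n).ncard = n - k := by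
    rw [(hinj.mono fun l hl => mem_Iio.2 hl.2).ncard_image, ncard_Ico_nat]
  obtain ⟨h2, htriad⟩ := hM.triad_insert_of_mem_dual_closure (by omega) (hYF.trans hFE) (by omega)
    (fun h => hxF (hYF h)) hx
  obtain rfl : n = k + 2 := by omega
  refine hmax.not_triad_extension hM h hk hinj hFE hxE hxF (by omega) ?_
  rwa [image_Ico_eq_insert_insert e le_rfl, Ico_self, image_empty, insert_empty_eq,
    insert_comm, pair_comm] at htriad

end Main

theorem stmt17_general (M : Matroid α) [M.Finite] (hM : ThreeConnected M)
    {n : ℕ} {e : ℕ → α} {F : Set α} (hn : 2 ≤ n)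
    (hF : F = e '' Set.Iio n) (hFE : F ⊆ M.E)
    (hinj : Set.InjOn e (Set.Iio n))
    (hcase : n = 2 ∨ (FanOrd M n e ∧ Triad M {e 0, e 1, e 2}))
    (hmax : MaximalFan M F)
    {a b : α} {i : ℕ} (hi : i = 1 ∨ i = 2)
    (ha : a ∉ F) (hb : b ∉ F)
    (hC : Circuit M {e 0, e i, a, b}) :
    ∀ x ∈ M.E \ (F ∪ {e 0, e i, a, b}), x ∉ M✶.closure F := by
  rintro x ⟨hxE, hxFC⟩ hx
  rw [mem_union, not_or] at hxFC
  obtain ⟨hxF, hxC⟩ := hxFC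
  have hC := circuit_iff_isCircuit.1 hC
  have hE : n + 1 < M.E.ncard := by
    have hsub : insert a (insert x F) ⊆ M.E :=
      insert_subset (hC.subset_ground (by simp)) (insert_subset hxE hFE)
    have hcard := ncard_le_ncard hsub M.ground_finite
    have hFfin : F.Finite := M.ground_finite.subset hFE
    have haxF : a ∉ insert x F := by
      rintro (rfl | haF)
      exacts [hxC (by simp), ha haF]
    rw [ncard_insert_of_notMem haxF (hFfin.insert x), ncard_insert_of_notMem hxF hFfin, hF,
      hinj.ncard_image, ncard_Iio_nat] at hcard
    omega
  rcases hcase with rfl | ⟨hfan, h0⟩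
  · exact hmax.notMem_dual_closure_tail hM hF ⟨fun j hj => by omega, fun j hj => by omega⟩
      hinj hFE hxE hxF hn hE ⟨0, rfl⟩ le_rfl (by rwa [Ico_zero_eq_Iio, ← hF])
  · obtain ⟨e', i', h, hinj', hF', he0, hei, hi'⟩ :=
      (hfan.altTriadTriangle h0).exists_swap hinj hfan.1 hi
    obtain ⟨k, hk, hkn, hxk⟩ := h.exists_mem_dual_closure_tail hinj' hfan.1 (hF.trans hF')
      (by rwa [he0, hei]) hi' ha hb hxF (by rwa [he0, hei]) hx
    exact hmax.notMem_dual_closure_tail hM (hF.trans hF') h hinj' hFE hxE hxF hn hE hk hkn hxk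

/-- If a maximal fan `F` (of size 2, or starting with a triad) admits a
4-element circuit `{e 0, e i, a, b}` with `i ∈ {1, 2}` and `a, b ∉ F`, then no
element outside `F ∪ C` lies in the coclosure of `F`. -/
theorem stmt17 (M : Matroid α) [M.Finite] (hM : ThreeConnected M)
    {n : ℕ} {e : ℕ → α} {F : Set α} (hn : 2 ≤ n)
    (hF : F = e '' Set.Iio n) (hFE : F ⊆ M.E)
    (hinj : Set.InjOn e (Set.Iio n))
    (hcase : n = 2 ∨ (FanOrd M n e ∧ Triad M {e 0, e 1, e 2}))
    (hmax : MaximalFan M F)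
    {a b : α} {i : ℕ} (hi : i = 1 ∨ i = 2) (hin : i < n)
    (ha : a ∉ F) (hb : b ∉ F)
    (hC : Circuit M {e 0, e i, a, b})
    (hCcard : ({e 0, e i, a, b} : Set α).ncard = 4) :
    ∀ x ∈ M.E \ (F ∪ {e 0, e i, a, b}), x ∉ M✶.closure F :=
  stmt17_general M hM hn hF hFE hinj hcase hmax hi ha hb hC
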